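/- arXiv:1212.6955 — 5 statements merged into one kernel-verified Lean document; each statement's English description precedes it below -/
import Mathlib

section
/- Let c = (c_1,…,c_m), d = (d_1,…,d_n) be increasing positive integer sequences, l = max(m,n), h = max(c_m, d_n), x ∈ [l], y ∈ [2,h], and V ⊆ [l] × [2,h]. Let A and B be families of labeled sets (subsets of [l]×[h] with at most one pair per first coordinate, bounded by c resp. d) such that (A ∩ B) \ V ≠ ∅ for all A ∈ A, B ∈ B. Then (C ∩ D) \ (V ∪ {(x,y)}) ≠ ∅ for all C ∈ Γ_{x,y}(A), D ∈ Γ_{x,y}(B), where γ_{x,y}(S) = (S \ {(x,y)}) ∪ {(x,1)} if (x,y) ∈ S, else S, and Γ_{x,y}(F) = {γ_{x,y}(F) : F ∈ F, γ_{x,y}(F) ∉ F} ∪ {F ∈ F : γ_{x,y}(F) ∈ F}. -/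
/-!
A member of `Γ_{x,y}(F)` either lies in `F` together with its shift, or is the shift `γ(S)` of
some `S ∈ F` containing `(x, y)`. Two shifted sets meet in `(x, 1)`, which is not in `V ⊆ [l] × [2, h]`.
Otherwise one of the two sets, `C`, is stable, and the other contains `T \ {(x, y)}` for some
`T` of the other family. An element of `(C ∩ T) \ V` works unless it is `(x, y)`; in that case
an element of `(γ(C) ∩ T) \ V` works: it is not `(x, y)`, and it is not `(x, 1)` because the
labeled set `T` already contains `(x, y)`.
-/

def gamma (x y : ℕ) (S : Finset (ℕ × ℕ)) : Finset (ℕ × ℕ) :=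
  if (x, y) ∈ S then insert (x, 1) (S.erase (x, y)) else S

def Gamma (x y : ℕ) (F : Finset (Finset (ℕ × ℕ))) : Finset (Finset (ℕ × ℕ)) :=
  (F.filter fun A => gamma x y A ∈ F) ∪
    ((F.filter fun A => gamma x y A ∉ F).image (gamma x y))

/-- `S` is a labeled set in `L_c^{(≤ m)}`: nonempty, entries `(i, a_i)` with
`i ∈ [m]`, `a_i ∈ [c_i]`, at most one pair per first coordinate. -/
def IsLabeled (m : ℕ) (c : ℕ → ℕ) (S : Finset (ℕ × ℕ)) : Prop :=
  S.Nonempty ∧ (∀ p ∈ S, 1 ≤ p.1 ∧ p.1 ≤ m ∧ 1 ≤ p.2 ∧ p.2 ≤ c p.1) ∧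
    ∀ p ∈ S, ∀ q ∈ S, p.1 = q.1 → p = q

section Gamma

variable {x y : ℕ} {S : Finset (ℕ × ℕ)} {F : Finset (Finset (ℕ × ℕ))}

lemma gamma_of_mem (h : (x, y) ∈ S) : gamma x y S = insert (x, 1) (S.erase (x, y)) :=
  if_pos h

lemma gamma_of_not_mem (h : (x, y) ∉ S) : gamma x y S = S :=
  if_neg h

lemma mk_one_mem_gamma (h : (x, y) ∈ S) : (x, 1) ∈ gamma x y S := by
  rw [gamma_of_mem h]
  exact Finset.mem_insert_self _ _

lemma not_mem_gamma (hy : y ≠ 1) : (x, y) ∉ gamma x y S := by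
  by_cases h : (x, y) ∈ S
  · simp [gamma_of_mem h, hy]
  · rwa [gamma_of_not_mem h]

lemma erase_subset_gamma : S.erase (x, y) ⊆ gamma x y S := by
  by_cases h : (x, y) ∈ S
  · rw [gamma_of_mem h]
    exact Finset.subset_insert _ _
  · rw [gamma_of_not_mem h]
    exact Finset.erase_subset _ _

lemma mem_of_mem_gamma {p : ℕ × ℕ} (hp : p ∈ gamma x y S) (hne : p ≠ (x, 1)) : p ∈ S := by
  by_cases h : (x, y) ∈ S
  · rw [gamma_of_mem h, Finset.mem_insert, Finset.mem_erase] at hp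
    exact (hp.resolve_left hne).2
  · rwa [gamma_of_not_mem h] at hp

lemma mem_of_gamma_not_mem (hS : S ∈ F) (hγ : gamma x y S ∉ F) : (x, y) ∈ S := by
  by_contra h
  exact hγ (by rwa [gamma_of_not_mem h])

lemma mem_Gamma {C : Finset (ℕ × ℕ)} :
    C ∈ Gamma x y F ↔ (C ∈ F ∧ gamma x y C ∈ F) ∨ ∃ S ∈ F, gamma x y S ∉ F ∧ gamma x y S = C := by
  simp only [Gamma, Finset.mem_union, Finset.mem_filter, Finset.mem_image, and_assoc]

lemma exists_erase_subset_of_mem_Gamma {C : Finset (ℕ × ℕ)} (hC : C ∈ Gamma x y F) :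
    ∃ S ∈ F, S.erase (x, y) ⊆ C := by
  rcases mem_Gamma.1 hC with ⟨hCF, -⟩ | ⟨S, hSF, -, rfl⟩
  · exact ⟨C, hCF, Finset.erase_subset _ _⟩
  · exact ⟨S, hSF, erase_subset_gamma⟩

lemma inter_sdiff_nonempty_of_stable (hy : y ≠ 1) {T D V : Finset (ℕ × ℕ)}
    (hT : (x, y) ∈ T → (x, 1) ∉ T) (hTD : T.erase (x, y) ⊆ D)
    (hST : ((S ∩ T) \ V).Nonempty) (hγST : ((gamma x y S ∩ T) \ V).Nonempty) :
    ((S ∩ D) \ insert (x, y) V).Nonempty := by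
  obtain ⟨p, hp⟩ := hST
  simp only [Finset.mem_sdiff, Finset.mem_inter] at hp
  by_cases hpxy : p = (x, y)
  · subst hpxy
    obtain ⟨r, hr⟩ := hγST
    simp only [Finset.mem_sdiff, Finset.mem_inter] at hr
    have hr_ne : r ≠ (x, y) := fun h => not_mem_gamma hy (h ▸ hr.1.1)
    have hr_ne_one : r ≠ (x, 1) := fun h => hT hp.1.2 (h ▸ hr.1.2)
    refine ⟨r, ?_⟩
    simp only [Finset.mem_sdiff, Finset.mem_inter, Finset.mem_insert, not_or]
    exact ⟨⟨mem_of_mem_gamma hr.1.1 hr_ne_one, hTD (Finset.mem_erase.2 ⟨hr_ne, hr.1.2⟩)⟩,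
      hr_ne, hr.2⟩
  · refine ⟨p, ?_⟩
    simp only [Finset.mem_sdiff, Finset.mem_inter, Finset.mem_insert, not_or]
    exact ⟨⟨hp.1.1, hTD (Finset.mem_erase.2 ⟨hpxy, hp.1.2⟩)⟩, hpxy, hp.2⟩

end Gamma

lemma IsLabeled.snd_eq {m : ℕ} {c : ℕ → ℕ} {S : Finset (ℕ × ℕ)} (hS : IsLabeled m c S)
    {i a b : ℕ} (ha : (i, a) ∈ S) (hb : (i, b) ∈ S) : a = b :=
  (Prod.ext_iff.1 (hS.2.2 _ ha _ hb rfl)).2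

theorem stmt11_general (m n : ℕ) (c d : ℕ → ℕ)
    (x y : ℕ)
    (hy : y ∈ Finset.Icc 2 (max (c m) (d n)))
    (V : Finset (ℕ × ℕ))
    (hV : V ⊆ Finset.Icc 1 (max m n) ×ˢ Finset.Icc 2 (max (c m) (d n)))
    (A B : Finset (Finset (ℕ × ℕ)))
    (hA : ∀ S ∈ A, IsLabeled m c S) (hB : ∀ S ∈ B, IsLabeled n d S)
    (hcross : ∀ S ∈ A, ∀ T ∈ B, ((S ∩ T) \ V).Nonempty) :
    ∀ C ∈ Gamma x y A, ∀ D ∈ Gamma x y B,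
      ((C ∩ D) \ insert (x, y) V).Nonempty := by
  intro C hC D hD
  have hy1 : y ≠ 1 := by have := (Finset.mem_Icc.1 hy).1; omega
  have hyA : ∀ S ∈ A, (x, y) ∈ S → (x, 1) ∉ S := fun S hS h h1 => hy1 ((hA S hS).snd_eq h h1)
  have hyB : ∀ T ∈ B, (x, y) ∈ T → (x, 1) ∉ T := fun T hT h h1 => hy1 ((hB T hT).snd_eq h h1)
  rcases mem_Gamma.1 hC with ⟨hCA, hγCA⟩ | ⟨S, hSA, hγSA, rfl⟩
  · obtain ⟨T, hTB, hTD⟩ := exists_erase_subset_of_mem_Gamma hD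
    exact inter_sdiff_nonempty_of_stable hy1 (hyB T hTB) hTD (hcross C hCA T hTB)
      (hcross _ hγCA T hTB)
  rcases mem_Gamma.1 hD with ⟨hDB, hγDB⟩ | ⟨T, hTB, hγTB, rfl⟩
  · rw [Finset.inter_comm]
    refine inter_sdiff_nonempty_of_stable hy1 (hyA S hSA) erase_subset_gamma ?_ ?_ <;>
      rw [Finset.inter_comm]
    exacts [hcross S hSA D hDB, hcross S hSA _ hγDB]
  · have hx1V : (x, 1) ∉ V := fun h => by
      have := (Finset.mem_Icc.1 (Finset.mem_product.1 (hV h)).2).1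
      omega
    refine ⟨(x, 1), Finset.mem_sdiff.2 ⟨Finset.mem_inter.2 ⟨?_, ?_⟩, ?_⟩⟩
    · exact mk_one_mem_gamma (mem_of_gamma_not_mem hSA hγSA)
    · exact mk_one_mem_gamma (mem_of_gamma_not_mem hTB hγTB)
    · simp [hx1V, hy1.symm]

theorem stmt11 (m n : ℕ) (hm : 1 ≤ m) (hn : 1 ≤ n) (c d : ℕ → ℕ)
    (hcmono : ∀ i j, 1 ≤ i → i ≤ j → j ≤ m → c i ≤ c j)
    (hcpos : ∀ i, 1 ≤ i → i ≤ m → 1 ≤ c i)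
    (hdmono : ∀ i j, 1 ≤ i → i ≤ j → j ≤ n → d i ≤ d j)
    (hdpos : ∀ i, 1 ≤ i → i ≤ n → 1 ≤ d i)
    (x y : ℕ) (hx : x ∈ Finset.Icc 1 (max m n))
    (hy : y ∈ Finset.Icc 2 (max (c m) (d n)))
    (V : Finset (ℕ × ℕ))
    (hV : V ⊆ Finset.Icc 1 (max m n) ×ˢ Finset.Icc 2 (max (c m) (d n)))
    (A B : Finset (Finset (ℕ × ℕ)))
    (hA : ∀ S ∈ A, IsLabeled m c S) (hB : ∀ S ∈ B, IsLabeled n d S)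
    (hcross : ∀ S ∈ A, ∀ T ∈ B, ((S ∩ T) \ V).Nonempty) :
    ∀ C ∈ Gamma x y A, ∀ D ∈ Gamma x y B,
      ((C ∩ D) \ insert (x, y) V).Nonempty :=
  stmt11_general m n c d x y hy V hV A B hA hB hcross
end

section
/- Let c = (c_1,…,c_n) be an increasing positive integer sequence with c_1 ≥ 3 and let r ∈ [n]. Define w(A) = |{L ∈ L_c^{(r)} : L ∩ ([n] × {1}) = A × {1}}| for A ⊆ [n] with |A| ≤ r. Then w(A) ≥ 2·w(A') whenever A ⊊ A' and |A'| ≤ r. -/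
def IsLabeledR (n : ℕ) (c : ℕ → ℕ) (r : ℕ) (S : Finset (ℕ × ℕ)) : Prop :=
  S.card = r ∧ (∀ p ∈ S, 1 ≤ p.1 ∧ p.1 ≤ n ∧ 1 ≤ p.2 ∧ p.2 ≤ c p.1) ∧
    ∀ p ∈ S, ∀ q ∈ S, p.1 = q.1 → p = q

/-- `labW n c r A = |{L ∈ L_c^{(r)} : L ∩ ([n] × {1}) = A × {1}}|`. -/
noncomputable def labW (n : ℕ) (c : ℕ → ℕ) (r : ℕ) (A : Finset ℕ) : ℕ :=
  Set.ncard {L : Finset (ℕ × ℕ) | IsLabeledR n c r L ∧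
    L ∩ (Finset.Icc 1 n ×ˢ ({1} : Finset ℕ)) = A ×ˢ ({1} : Finset ℕ)}

theorem stmt14 (n r : ℕ) (c : ℕ → ℕ)
    (hcmono : ∀ i j, 1 ≤ i → i ≤ j → j ≤ n → c i ≤ c j) (hc1 : 3 ≤ c 1)
    (hr : 1 ≤ r) (hrn : r ≤ n)
    (A A' : Finset ℕ) (hA' : A' ⊆ Finset.Icc 1 n) (hcard : A'.card ≤ r)
    (hss : A ⊂ A') :
    2 * labW n c r A' ≤ labW n c r A := by
  classical
  have hsub : A ⊆ A' := hss.subset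
  set D : Finset ℕ := A' \ A with hDdef
  have hDne : D.Nonempty := by
    rw [hDdef]
    exact Finset.sdiff_nonempty.mpr hss.not_subset
  obtain ⟨x, hxD⟩ := hDne
  have hDA' : D ⊆ A' := Finset.sdiff_subset
  -- basic facts about elements of A'
  have hA'range : ∀ i ∈ A', 1 ≤ i ∧ i ≤ n := by
    intro i hi
    have := hA' hi
    simpa [Finset.mem_Icc] using this
  have hc3 : ∀ i ∈ A', 3 ≤ c i := by
    intro i hi
    obtain ⟨h1, h2⟩ := hA'range i hi
    exact le_trans hc1 (hcmono 1 i le_rfl h1 h2)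
  -- the two sets being counted
  set S : Set (Finset (ℕ × ℕ)) := {L : Finset (ℕ × ℕ) | IsLabeledR n c r L ∧
    L ∩ (Finset.Icc 1 n ×ˢ ({1} : Finset ℕ)) = A ×ˢ ({1} : Finset ℕ)} with hSdef
  set S' : Set (Finset (ℕ × ℕ)) := {L : Finset (ℕ × ℕ) | IsLabeledR n c r L ∧
    L ∩ (Finset.Icc 1 n ×ˢ ({1} : Finset ℕ)) = A' ×ˢ ({1} : Finset ℕ)} with hS'def
  -- finiteness of S
  have hSfin : S.Finite := by
    apply Set.Finite.subset ((Finset.Icc 1 n ×ˢ Finset.Icc 1 (c n)).powerset : Finset (Finset (ℕ × ℕ))).finite_toSet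
    intro L hL
    simp only [Finset.coe_powerset, Set.mem_preimage, Set.mem_powerset_iff,
      Finset.coe_subset, Finset.mem_coe]
    intro p hp
    obtain ⟨h1, h2, h3, h4⟩ := hL.1.2.1 p hp
    have : c p.1 ≤ c n := hcmono p.1 n h1 h2 le_rfl
    simp only [Finset.mem_product, Finset.mem_Icc]
    exact ⟨⟨h1, h2⟩, h3, le_trans h4 this⟩
  -- facts about members of S'
  have hmem1 : ∀ L ∈ S', ∀ i ∈ A', (i, 1) ∈ L := by
    intro L hL i hi
    have : (i, 1) ∈ A' ×ˢ ({1} : Finset ℕ) := by simp [hi]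
    rw [← hL.2] at this
    exact (Finset.mem_inter.mp this).1
  have hmem2 : ∀ L ∈ S', ∀ p ∈ L, p.2 = 1 → p.1 ∈ A' := by
    intro L hL p hp h1
    obtain ⟨ha, hb, _, _⟩ := hL.1.2.1 p hp
    have : p ∈ L ∩ (Finset.Icc 1 n ×ˢ ({1} : Finset ℕ)) := by
      rw [Finset.mem_inter, Finset.mem_product, Finset.mem_Icc, Finset.mem_singleton]
      exact ⟨hp, ⟨ha, hb⟩, h1⟩
    rw [hL.2] at this
    exact (Finset.mem_product.mp this).1
  have hmem3 : ∀ L ∈ S', ∀ p ∈ L, p.1 ∈ D → p = (p.1, 1) := by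
    intro L hL p hp hpD
    exact hL.1.2.2 p hp (p.1, 1) (hmem1 L hL p.1 (hDA' hpD)) rfl
  -- the map
  set F : ℕ → Finset (ℕ × ℕ) → Finset (ℕ × ℕ) := fun a L =>
    L.filter (fun p => p.1 ∉ D) ∪ (D.erase x) ×ˢ ({2} : Finset ℕ) ∪ {(x, a)} with hFdef
  have hFmem : ∀ a L p, p ∈ F a L ↔
      (p ∈ L ∧ p.1 ∉ D) ∨ (p.1 ∈ D ∧ p.1 ≠ x ∧ p.2 = 2) ∨ p = (x, a) := by
    intro a L p
    simp only [hFdef, Finset.mem_union, Finset.mem_filter, Finset.mem_product,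
      Finset.mem_singleton, Finset.mem_erase]
    tauto
  -- filter on D is D ×ˢ {1}
  have hfiltD : ∀ L ∈ S', L.filter (fun p => p.1 ∈ D) = D ×ˢ ({1} : Finset ℕ) := by
    intro L hL
    ext p
    simp only [Finset.mem_filter, Finset.mem_product, Finset.mem_singleton]
    constructor
    · rintro ⟨hp, hpD⟩
      have := hmem3 L hL p hp hpD
      exact ⟨hpD, by rw [this]⟩
    · rintro ⟨hpD, hp2⟩
      have : p = (p.1, 1) := by ext <;> simp [hp2]
      rw [this]
      exact ⟨hmem1 L hL p.1 (hDA' hpD), hpD⟩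
  -- key: F maps S' into S
  have hFS : ∀ a, 2 ≤ a → a ≤ 3 → ∀ L ∈ S', F a L ∈ S := by
    intro a ha2 ha3 L hL
    obtain ⟨⟨hcardL, hvalid, hdist⟩, hint⟩ := hL
    constructor
    · refine ⟨?_, ?_, ?_⟩
      · -- cardinality
        have hdisj1 : Disjoint (L.filter (fun p => p.1 ∉ D)) ((D.erase x) ×ˢ ({2} : Finset ℕ)) := by
          rw [Finset.disjoint_left]
          intro p hp hp'
          have h1 := (Finset.mem_filter.mp hp).2
          have h2 := (Finset.mem_product.mp hp').1
          exact h1 (Finset.mem_of_mem_erase h2)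
        have hdisj2 : Disjoint (L.filter (fun p => p.1 ∉ D) ∪ (D.erase x) ×ˢ ({2} : Finset ℕ))
            ({(x, a)} : Finset (ℕ × ℕ)) := by
          rw [Finset.disjoint_right]
          intro p hp hp'
          simp only [Finset.mem_singleton] at hp
          subst hp
          simp only [Finset.mem_union, Finset.mem_filter, Finset.mem_product,
            Finset.mem_singleton, Finset.mem_erase] at hp'
          rcases hp' with ⟨_, h⟩ | ⟨⟨h, _⟩, _⟩
          · exact h hxD
          · exact h rfl
        have hcsum : (L.filter (fun p => p.1 ∈ D)).card + (L.filter (fun p => p.1 ∉ D)).card = r := by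
          rw [Finset.card_filter_add_card_filter_not, hcardL]
        rw [hfiltD L ⟨⟨hcardL, hvalid, hdist⟩, hint⟩] at hcsum
        have hDcard : (D ×ˢ ({1} : Finset ℕ)).card = D.card := by
          simp [Finset.card_product]
        rw [hDcard] at hcsum
        have hDpos : 1 ≤ D.card := Finset.card_pos.mpr ⟨x, hxD⟩
        have : (F a L).card = (L.filter (fun p => p.1 ∉ D)).card + (D.erase x).card + 1 := by
          rw [hFdef]
          simp only
          rw [Finset.card_union_of_disjoint hdisj2, Finset.card_union_of_disjoint hdisj1,
            Finset.card_product, Finset.card_singleton, Finset.card_singleton, mul_one]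
        rw [this, Finset.card_erase_of_mem hxD]
        omega
      · -- validity
        intro p hp
        rw [hFmem] at hp
        rcases hp with ⟨hp, _⟩ | ⟨hpD, _, hp2⟩ | hp
        · exact hvalid p hp
        · obtain ⟨h1, h2⟩ := hA'range p.1 (hDA' hpD)
          have := hc3 p.1 (hDA' hpD)
          exact ⟨h1, h2, by omega, by omega⟩
        · subst hp
          obtain ⟨h1, h2⟩ := hA'range x (hDA' hxD)
          have := hc3 x (hDA' hxD)
          refine ⟨h1, h2, ?_, ?_⟩
          · show 1 ≤ a; omega
          · show a ≤ c x; omega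
      · -- distinct first coordinates
        intro p hp q hq hpq
        rw [hFmem] at hp hq
        rcases hp with ⟨hp, hpD⟩ | ⟨hpD, hpx, hp2⟩ | hp <;>
          rcases hq with ⟨hq, hqD⟩ | ⟨hqD, hqx, hq2⟩ | hq
        · exact hdist p hp q hq hpq
        · exact absurd (by rw [hpq]; exact hqD) hpD
        · have hx1 : p.1 = x := by rw [hq] at hpq; exact hpq
          exact absurd (by rw [hx1]; exact hxD) hpD
        · exact absurd (by rw [← hpq]; exact hpD) hqD
        · rw [Prod.ext_iff]; exact ⟨hpq, by rw [hp2, hq2]⟩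
        · have hx1 : p.1 = x := by rw [hq] at hpq; exact hpq
          exact absurd hx1 hpx
        · have hx1 : q.1 = x := by rw [hp] at hpq; exact hpq.symm
          exact absurd (by rw [hx1]; exact hxD) hqD
        · have hx1 : q.1 = x := by rw [hp] at hpq; exact hpq.symm
          exact absurd hx1 hqx
        · rw [hp, hq]
    · -- intersection condition
      ext p
      simp only [Finset.mem_inter, Finset.mem_product, Finset.mem_singleton, Finset.mem_Icc]
      constructor
      · rintro ⟨hp, ⟨h1, h2⟩, h3⟩
        rw [hFmem] at hp
        rcases hp with ⟨hp, hpD⟩ | ⟨_, _, hp2⟩ | hp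
        · have hpA' : p.1 ∈ A' := hmem2 L ⟨⟨hcardL, hvalid, hdist⟩, hint⟩ p hp h3
          have : p.1 ∈ A := by
            by_contra hc
            exact hpD (Finset.mem_sdiff.mpr ⟨hpA', hc⟩)
          exact ⟨this, h3⟩
        · omega
        · rw [hp] at h3; simp at h3; omega
      · rintro ⟨hpA, h1⟩
        have hpA' : p.1 ∈ A' := hsub hpA
        have hpnD : p.1 ∉ D := by
          rw [hDdef]
          simp [Finset.mem_sdiff, hpA]
        obtain ⟨hr1, hr2⟩ := hA'range p.1 hpA'
        refine ⟨?_, ⟨hr1, hr2⟩, h1⟩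
        rw [hFmem]
        left
        constructor
        · have : p = (p.1, 1) := by ext <;> simp [h1]
          rw [this]
          exact hmem1 L ⟨⟨hcardL, hvalid, hdist⟩, hint⟩ p.1 hpA'
        · exact hpnD
  -- injectivity of F a on S'
  have hFinj : ∀ a, Set.InjOn (F a) S' := by
    intro a L hL L' hL' heq
    ext p
    by_cases hpD : p.1 ∈ D
    · constructor
      · intro hp
        have h1 := hmem3 L hL p hp hpD
        rw [h1]
        exact hmem1 L' hL' p.1 (hDA' hpD)
      · intro hp
        have h1 := hmem3 L' hL' p hp hpD
        rw [h1]
        exact hmem1 L hL p.1 (hDA' hpD)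
    · have e1 : p ∈ L ↔ p ∈ F a L := by
        rw [hFmem]
        constructor
        · intro h; exact Or.inl ⟨h, hpD⟩
        · rintro (⟨h, _⟩ | ⟨h, _⟩ | h)
          · exact h
          · exact absurd h hpD
          · rw [h] at hpD; exact absurd hxD (by simpa using hpD)
      have e2 : p ∈ L' ↔ p ∈ F a L' := by
        rw [hFmem]
        constructor
        · intro h; exact Or.inl ⟨h, hpD⟩
        · rintro (⟨h, _⟩ | ⟨h, _⟩ | h)
          · exact h
          · exact absurd h hpD
          · rw [h] at hpD; exact absurd hxD (by simpa using hpD)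
      rw [e1, e2, heq]
  -- disjointness of images
  have hdisjim : Disjoint (F 2 '' S') (F 3 '' S') := by
    rw [Set.disjoint_left]
    rintro L ⟨L2, hL2, rfl⟩ ⟨L3, hL3, heq⟩
    have h3 : ((x, 3) : ℕ × ℕ) ∈ F 3 L3 := by
      rw [hFmem]; right; right; rfl
    rw [heq] at h3
    rw [hFmem] at h3
    rcases h3 with ⟨_, h⟩ | ⟨_, h, _⟩ | h
    · exact h hxD
    · exact h rfl
    · simp at h
  -- conclude
  have hsubS2 : F 2 '' S' ⊆ S := by rintro L ⟨L', hL', rfl⟩; exact hFS 2 le_rfl (by norm_num) L' hL'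
  have hsubS3 : F 3 '' S' ⊆ S := by rintro L ⟨L', hL', rfl⟩; exact hFS 3 (by norm_num) le_rfl L' hL'
  have hunion : (F 2 '' S') ∪ (F 3 '' S') ⊆ S := Set.union_subset hsubS2 hsubS3
  have hfin2 : (F 2 '' S').Finite := hSfin.subset hsubS2
  have hfin3 : (F 3 '' S').Finite := hSfin.subset hsubS3
  have hS'fin : S'.Finite := Set.Finite.of_finite_image (hSfin.subset hsubS2) (hFinj 2)
  have hcard2 : (F 2 '' S').ncard = S'.ncard := Set.ncard_image_of_injOn (hFinj 2)
  have hcard3 : (F 3 '' S').ncard = S'.ncard := Set.ncard_image_of_injOn (hFinj 3)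
  have hle : ((F 2 '' S') ∪ (F 3 '' S')).ncard ≤ S.ncard :=
    Set.ncard_le_ncard hunion hSfin
  rw [Set.ncard_union_eq hdisjim hfin2 hfin3, hcard2, hcard3] at hle
  show 2 * S'.ncard ≤ S.ncard
  omega
end

section
/- Let c = (c_1,…,c_n) be an increasing positive integer sequence with c_1 ≥ 3 and let r ∈ [n]. Define w(A) = |{L ∈ L_c^{(r)} : L ∩ ([n] × {1}) = A × {1}}| for A ⊆ [n] with |A| ≤ r. Then w(δ_{i,j}(A)) ≥ w(A) for all such A and all i < j in [n], where δ_{i,j}(A) = (A \ {j}) ∪ {i} if j ∈ A, i ∉ A, else A. -/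
def delta (i j : ℕ) (S : Finset ℕ) : Finset ℕ :=
  if j ∈ S ∧ i ∉ S then insert i (S.erase j) else S

/-!
Transposing the indices `i` and `j` sends a labeled set whose part on level `1` is `A × {1}` to one
whose part on level `1` is `δ_{i,j}(A) × {1}`: the point `(j, 1)` becomes `(i, 1)`, and the label
of `i`, if there is one, moves to `j`, where it is still admissible because `c i ≤ c j`. This
relabelling is injective, so the fibre over `A` is no larger than the fibre over `δ_{i,j}(A)`.
-/

open Finset

def labFiber (n : ℕ) (c : ℕ → ℕ) (r : ℕ) (A : Finset ℕ) : Set (Finset (ℕ × ℕ)) :=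
  {L | IsLabeledR n c r L ∧ L ∩ (Icc 1 n ×ˢ {1}) = A ×ˢ {1}}

theorem labW_eq_ncard_labFiber (n : ℕ) (c : ℕ → ℕ) (r : ℕ) (A : Finset ℕ) :
    labW n c r A = (labFiber n c r A).ncard := rfl

theorem finite_setOf_isLabeledR (n : ℕ) (c : ℕ → ℕ) (r : ℕ) :
    {L | IsLabeledR n c r L}.Finite := by
  refine (Icc 1 n ×ˢ Icc 1 ((Icc 1 n).sup c)).powerset.finite_toSet.subset ?_
  intro L hL
  rw [mem_coe, mem_powerset]
  intro p hp
  obtain ⟨h1, h2, h3, h4⟩ := hL.2.1 p hp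
  simp only [mem_product, mem_Icc]
  exact ⟨⟨h1, h2⟩, h3, h4.trans (le_sup (mem_Icc.mpr ⟨h1, h2⟩))⟩

theorem mem_Icc_of_mem_labFiber {n : ℕ} {c : ℕ → ℕ} {r : ℕ} {A : Finset ℕ} {L : Finset (ℕ × ℕ)}
    (hL : L ∈ labFiber n c r A) {a : ℕ} (ha : a ∈ A) : a ∈ Icc 1 n := by
  have : (a, 1) ∈ L ∩ (Icc 1 n ×ˢ {1}) := hL.2 ▸ mem_product.mpr ⟨ha, mem_singleton_self 1⟩
  exact (mem_product.mp (mem_inter.mp this).2).1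

theorem delta_eq_map_swap {i j : ℕ} {A : Finset ℕ} (hj : j ∈ A) (hi : i ∉ A) :
    delta i j A = A.map (Equiv.swap i j).toEmbedding := by
  ext x
  simp only [delta, hj, hi, not_false_eq_true, and_self, if_true, mem_insert, mem_erase,
    mem_map_equiv, Equiv.symm_swap, Equiv.swap_apply_def]
  split_ifs <;> grind

def swapIndex (i j : ℕ) : Equiv.Perm (ℕ × ℕ) := (Equiv.swap i j).prodCongr (Equiv.refl ℕ)

theorem swapIndex_toEmbedding_apply (i j : ℕ) (p : ℕ × ℕ) :
    (swapIndex i j).toEmbedding p = (Equiv.swap i j p.1, p.2) := rfl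

theorem map_swapIndex_product (i j : ℕ) (s t : Finset ℕ) :
    (s ×ˢ t).map (swapIndex i j).toEmbedding = s.map (Equiv.swap i j).toEmbedding ×ˢ t := by
  conv_rhs => rw [← map_refl (s := t)]
  exact prodMap_map_product (Equiv.swap i j).toEmbedding (.refl ℕ) s t

theorem map_swap_of_mem {i j : ℕ} {s : Finset ℕ} (hi : i ∈ s) (hj : j ∈ s) :
    s.map (Equiv.swap i j).toEmbedding = s :=
  map_perm fun _ hx => by
    rcases (Equiv.swap_apply_ne_self_iff.mp hx).2 with rfl | rfl <;> assumption

theorem IsLabeledR.map_swapIndex {n : ℕ} {c : ℕ → ℕ} {r : ℕ} {L : Finset (ℕ × ℕ)} {i j : ℕ}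
    (hL : IsLabeledR n c r L) (hjL : (j, 1) ∈ L) (hi : i ∈ Icc 1 n) (hj : j ∈ Icc 1 n)
    (hci : 1 ≤ c i) (hcij : c i ≤ c j) :
    IsLabeledR n c r (L.map (swapIndex i j).toEmbedding) := by
  obtain ⟨hcard, hbound, hunique⟩ := hL
  rw [mem_Icc] at hi hj
  refine ⟨by rw [card_map, hcard], forall_mem_map.mpr fun q hq => ?_,
    forall_mem_map.mpr fun p hp => forall_mem_map.mpr fun q hq hpq => ?_⟩
  · obtain ⟨h1, h2, h3, h4⟩ := hbound q hq
    by_cases hqi : q.1 = i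
    · rw [swapIndex_toEmbedding_apply, hqi, Equiv.swap_apply_left]
      exact ⟨hj.1, hj.2, h3, hqi ▸ h4 |>.trans hcij⟩
    by_cases hqj : q.1 = j
    · -- `(j, 1)` is the only point of `L` over `j`, so it is sent to `(i, 1)`
      obtain rfl : q = (j, 1) := hunique q hq _ hjL hqj
      rw [swapIndex_toEmbedding_apply, Equiv.swap_apply_right]
      exact ⟨hi.1, hi.2, le_rfl, hci⟩
    · rw [swapIndex_toEmbedding_apply, Equiv.swap_apply_of_ne_of_ne hqi hqj]
      exact ⟨h1, h2, h3, h4⟩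
  · rw [swapIndex_toEmbedding_apply, swapIndex_toEmbedding_apply] at hpq
    exact congrArg _ (hunique p hp q hq ((Equiv.swap i j).injective hpq))

theorem map_swapIndex_mem_labFiber {n : ℕ} {c : ℕ → ℕ} {r : ℕ} {A : Finset ℕ}
    {L : Finset (ℕ × ℕ)} {i j : ℕ} (hL : L ∈ labFiber n c r A) (hjA : j ∈ A) (hiA : i ∉ A)
    (hi : i ∈ Icc 1 n) (hci : 1 ≤ c i) (hcij : c i ≤ c j) :
    L.map (swapIndex i j).toEmbedding ∈ labFiber n c r (delta i j A) := by
  have hj : j ∈ Icc 1 n := mem_Icc_of_mem_labFiber hL hjA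
  have hjL : (j, 1) ∈ L :=
    (mem_inter.mp (hL.2 ▸ mem_product.mpr ⟨hjA, mem_singleton_self 1⟩)).1
  refine ⟨hL.1.map_swapIndex hjL hi hj hci hcij, ?_⟩
  calc L.map (swapIndex i j).toEmbedding ∩ (Icc 1 n ×ˢ {1})
      = (L ∩ (Icc 1 n ×ˢ {1})).map (swapIndex i j).toEmbedding := by
        rw [map_inter, map_swapIndex_product, map_swap_of_mem hi hj]
    _ = delta i j A ×ˢ {1} := by
        rw [hL.2, map_swapIndex_product, delta_eq_map_swap hjA hiA]

theorem stmt15_general (n r : ℕ) (c : ℕ → ℕ)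
    (hcmono : ∀ i j, 1 ≤ i → i ≤ j → j ≤ n → c i ≤ c j) (hc1 : 3 ≤ c 1)
    (A : Finset ℕ)
    (i j : ℕ) (hi : i ∈ Finset.Icc 1 n) (hij : i < j) :
    labW n c r A ≤ labW n c r (delta i j A) := by
  by_cases hji : j ∈ A ∧ i ∉ A
  swap
  · rw [delta, if_neg hji]
  obtain ⟨hjA, hiA⟩ := hji
  have hci : 1 ≤ c i := by
    have := hcmono 1 i le_rfl (mem_Icc.mp hi).1 (mem_Icc.mp hi).2
    omega
  rw [labW_eq_ncard_labFiber, labW_eq_ncard_labFiber]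
  refine Set.ncard_le_ncard_of_injOn _ (fun L hL => ?_)
    (map_injective (swapIndex i j).toEmbedding).injOn
    ((finite_setOf_isLabeledR n c r).subset fun _ hL => hL.1)
  have hcij : c i ≤ c j :=
    hcmono i j (mem_Icc.mp hi).1 hij.le (mem_Icc.mp (mem_Icc_of_mem_labFiber hL hjA)).2
  exact map_swapIndex_mem_labFiber hL hjA hiA hi hci hcij

theorem stmt15 (n r : ℕ) (c : ℕ → ℕ)
    (hcmono : ∀ i j, 1 ≤ i → i ≤ j → j ≤ n → c i ≤ c j) (hc1 : 3 ≤ c 1)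
    (hr : 1 ≤ r) (hrn : r ≤ n)
    (A : Finset ℕ) (hA : A ⊆ Finset.Icc 1 n) (hcard : A.card ≤ r)
    (i j : ℕ) (hi : i ∈ Finset.Icc 1 n) (hj : j ∈ Finset.Icc 1 n) (hij : i < j) :
    labW n c r A ≤ labW n c r (delta i j A) :=
  stmt15_general n r c hcmono hc1 A i j hi hij
end

section
/- Let c = (c_1,…,c_n) be an increasing positive integer sequence with c_1 = 2, and let A, B ⊆ S_c = [c_1] × ⋯ × [c_n] be such that every tuple in A agrees in some coordinate with every tuple in B. Then |B| ≤ |S_c| − |A|, and consequently |A|·|B| ≤ (|S_c|/2)². -/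
/-!
The cyclic shift `θ(a)ᵢ = (aᵢ mod cᵢ) + 1` permutes the box `[c₁] × ⋯ × [cₙ]` and, since every
`cᵢ ≥ 2`, changes every coordinate. So if every tuple of `A` agrees with every tuple of `B` in
some coordinate, then `θ(A)` misses `B`, whence `|A| + |B| ≤ |S_c|`; AM–GM gives the product bound.
-/

open Finset

namespace Nat

variable {m x : ℕ}

theorem mod_add_one_of_mem_Icc (hx : x ∈ Icc 1 m) :
    x % m + 1 = if x = m then 1 else x + 1 := by
  obtain ⟨hx1, hxm⟩ := mem_Icc.1 hx
  split_ifs with h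
  · rw [h, Nat.mod_self]
  · rw [Nat.mod_eq_of_lt (lt_of_le_of_ne hxm h)]

theorem mod_add_one_mem_Icc (hm : 0 < m) : x % m + 1 ∈ Icc 1 m :=
  mem_Icc.2 ⟨Nat.le_add_left 1 _, Nat.mod_lt x hm⟩

theorem mod_add_one_injOn : Set.InjOn (fun x => x % m + 1) (Icc 1 m : Set ℕ) := by
  intro x hx y hy hxy
  simp only [mod_add_one_of_mem_Icc (mem_coe.1 hx), mod_add_one_of_mem_Icc (mem_coe.1 hy)] at hxy
  have := mem_Icc.1 (mem_coe.1 hx)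
  have := mem_Icc.1 (mem_coe.1 hy)
  split_ifs at hxy <;> omega

theorem mod_add_one_ne_self (hm : 2 ≤ m) (hx : x ∈ Icc 1 m) : x % m + 1 ≠ x := by
  rw [mod_add_one_of_mem_Icc hx]
  split_ifs <;> omega

end Nat

section CyclicShift

variable {ι : Type*} [Fintype ι] [DecidableEq ι] {c : ι → ℕ}

abbrev gridBox (c : ι → ℕ) : Finset (ι → ℕ) := Fintype.piFinset fun i => Icc 1 (c i)

def cyclicShift (c : ι → ℕ) (a : ι → ℕ) : ι → ℕ := fun i => a i % c i + 1

theorem card_gridBox (c : ι → ℕ) : #(gridBox c) = ∏ i, c i := by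
  simp

theorem mapsTo_cyclicShift (hc : ∀ i, 0 < c i) : Set.MapsTo (cyclicShift c) (gridBox c) (gridBox c) :=
  fun _ _ => Fintype.mem_piFinset.2 fun i => Nat.mod_add_one_mem_Icc (hc i)

theorem injOn_cyclicShift : Set.InjOn (cyclicShift c) (gridBox c : Set (ι → ℕ)) := by
  intro a ha b hb hab
  funext i
  exact Nat.mod_add_one_injOn (Fintype.mem_piFinset.1 (mem_coe.1 ha) i)
    (Fintype.mem_piFinset.1 (mem_coe.1 hb) i) (congr_fun hab i)

theorem cyclicShift_apply_ne (hc : ∀ i, 2 ≤ c i) {a : ι → ℕ} (ha : a ∈ gridBox c) (i : ι) :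
    cyclicShift c a i ≠ a i :=
  Nat.mod_add_one_ne_self (hc i) (Fintype.mem_piFinset.1 ha i)

theorem card_add_card_le_of_forall_exists_eq (hc : ∀ i, 2 ≤ c i) {A B : Finset (ι → ℕ)}
    (hA : A ⊆ gridBox c) (hB : B ⊆ gridBox c) (hcross : ∀ a ∈ A, ∀ b ∈ B, ∃ i, a i = b i) :
    #A + #B ≤ ∏ i, c i := by
  have hshift : Set.MapsTo (cyclicShift c) A (gridBox c \ B : Finset (ι → ℕ)) := by
    intro a ha
    refine mem_sdiff.2 ⟨mapsTo_cyclicShift (fun i => (hc i).trans_lt' two_pos) (hA ha), ?_⟩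
    intro hmem
    obtain ⟨i, hi⟩ := hcross a ha _ hmem
    exact cyclicShift_apply_ne hc (hA ha) i hi.symm
  have hle := card_le_card_of_injOn _ hshift (injOn_cyclicShift.mono (coe_subset.2 hA))
  rw [card_sdiff_of_subset hB, card_gridBox] at hle
  have := card_gridBox c ▸ card_le_card hB
  omega

end CyclicShift

theorem stmt16_general (n : ℕ) (c : Fin (n + 1) → ℕ) (hmono : Monotone c)
    (hc0 : c 0 = 2)
    (A B : Finset (Fin (n + 1) → ℕ))
    (hA : ∀ a ∈ A, ∀ i, 1 ≤ a i ∧ a i ≤ c i)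
    (hB : ∀ b ∈ B, ∀ i, 1 ≤ b i ∧ b i ≤ c i)
    (hcross : ∀ a ∈ A, ∀ b ∈ B, ∃ i, a i = b i) :
    B.card ≤ (∏ i, c i) - A.card ∧ 4 * (A.card * B.card) ≤ (∏ i, c i) ^ 2 := by
  have hc : ∀ i, 2 ≤ c i := fun i => hc0 ▸ hmono (Fin.zero_le i)
  have hsub : ∀ s : Finset (Fin (n + 1) → ℕ), (∀ a ∈ s, ∀ i, 1 ≤ a i ∧ a i ≤ c i) → s ⊆ gridBox c :=
    fun _ hs a ha => Fintype.mem_piFinset.2 fun i => mem_Icc.2 (hs a ha i)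
  have hsum := card_add_card_le_of_forall_exists_eq hc (hsub A hA) (hsub B hB) hcross
  refine ⟨by omega, ?_⟩
  calc 4 * (#A * #B) = 4 * #A * #B := (mul_assoc _ _ _).symm
    _ ≤ (#A + #B) ^ 2 := four_mul_le_sq_add _ _
    _ ≤ (∏ i, c i) ^ 2 := Nat.pow_le_pow_left hsum 2

theorem stmt16 (n : ℕ) (c : Fin (n + 1) → ℕ) (hmono : Monotone c) (hpos : ∀ i, 1 ≤ c i)
    (hc0 : c 0 = 2)
    (A B : Finset (Fin (n + 1) → ℕ))
    (hA : ∀ a ∈ A, ∀ i, 1 ≤ a i ∧ a i ≤ c i)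
    (hB : ∀ b ∈ B, ∀ i, 1 ≤ b i ∧ b i ≤ c i)
    (hcross : ∀ a ∈ A, ∀ b ∈ B, ∃ i, a i = b i) :
    B.card ≤ (∏ i, c i) - A.card ∧ 4 * (A.card * B.card) ≤ (∏ i, c i) ^ 2 :=
  stmt16_general n c hmono hc0 A B hA hB hcross
end

section
/- For an increasing positive integer sequence c = (c_1,…,c_n) and r ∈ [n], the number of r-partial sequences in S_c^{(r)} with first entry equal to 1 is Σ_{I ∈ C([2,n], r−1)} ∏_{i∈I} c_i, and this equals the maximum size of a star of S_c^{(r)} (i.e. |{a ∈ S_c^{(r)} : a_p = q}| ≤ |S_c^{(r)}(1)| for all p ∈ [n], q ∈ [c_p]). -/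
/-!
Every element of the star `{a ∈ S_c^{(r)} : a_p = q}` is determined by the set `I` of its
other `r - 1` nonzero positions together with a value in `[1, c_i]` at each `i ∈ I`, so the
star has `∑_{I ⊆ [n] \ {p}, |I| = r - 1} ∏_{i ∈ I} c_i` elements, independently of `q`.
Transposing `p` and `1` maps the index sets avoiding `p` bijectively onto those avoiding `1`,
and by monotonicity it can only increase each product, since it replaces `c_1` by `c_p`.
-/

open Finset

variable {ι : Type*} [Fintype ι]

/-- The star `{a ∈ S_c^{(r)} : a_p = q}` of the paper. -/
def partialSeqStar (c : ι → ℕ) (r : ℕ) (p : ι) (q : ℕ) : Set (ι → ℕ) :=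
  {a | ((univ.filter fun i => a i ≠ 0).card = r ∧ ∀ i, a i ≤ c i) ∧ a p = q}

variable [DecidableEq ι]

/-- The sequences with value `q` at `p` whose other nonzero positions are exactly `I`. -/
def starFiber (c : ι → ℕ) (p : ι) (q : ℕ) (I : Finset ι) : Finset (ι → ℕ) :=
  Fintype.piFinset fun i => if i = p then {q} else if i ∈ I then Icc 1 (c i) else {0}

theorem card_starFiber (c : ι → ℕ) {p : ι} (q : ℕ) {I : Finset ι} (hp : p ∉ I) :
    #(starFiber c p q I) = ∏ i ∈ I, c i := by
  rw [starFiber, Fintype.card_piFinset, ← Fintype.prod_ite_mem I c]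
  refine prod_congr rfl fun i _ => ?_
  by_cases hip : i = p
  · subst hip
    simp [hp]
  · split_ifs <;> simp

theorem filter_ne_zero_of_mem_starFiber {c : ι → ℕ} {p : ι} {q : ℕ} {I : Finset ι}
    (hq : q ≠ 0) {a : ι → ℕ} (ha : a ∈ starFiber c p q I) :
    univ.filter (fun i => a i ≠ 0) = insert p I := by
  ext i
  have hai := Fintype.mem_piFinset.mp ha i
  by_cases hip : i = p
  · subst hip
    simp_all
  · split_ifs at hai with hiI
    · simp only [mem_Icc] at hai
      simp [hiI, Nat.one_le_iff_ne_zero.mp hai.1]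
    · simp_all

theorem partialSeqStar_eq_biUnion (c : ι → ℕ) (k : ℕ) {p : ι} {q : ℕ} (hq : 1 ≤ q)
    (hqc : q ≤ c p) :
    partialSeqStar c (k + 1) p q =
      ↑((powersetCard k (univ.erase p)).biUnion (starFiber c p q)) := by
  ext a
  simp only [partialSeqStar, Set.mem_ofPred_eq, coe_biUnion, mem_coe, mem_powersetCard,
    Set.mem_iUnion, exists_prop]
  constructor
  · rintro ⟨⟨hcard, hle⟩, hap⟩
    have hp : p ∈ univ.filter fun i => a i ≠ 0 := by
      simp only [mem_filter, mem_univ, true_and]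
      omega
    refine ⟨(univ.filter fun i => a i ≠ 0).erase p, ⟨erase_subset_erase _ (subset_univ _), ?_⟩,
      Fintype.mem_piFinset.mpr fun i => ?_⟩
    · rw [card_erase_of_mem hp, hcard, Nat.add_sub_cancel]
    · by_cases hip : i = p
      · simp [hip, hap]
      · by_cases hai : a i = 0
        · simp [hip, hai]
        · simp [hip, hai, hle i, Nat.one_le_iff_ne_zero]
  · rintro ⟨I, ⟨hIp, hIk⟩, ha⟩
    have hpI : p ∉ I := fun h => by simpa using hIp h
    have hai := Fintype.mem_piFinset.mp ha
    refine ⟨⟨?_, fun i => ?_⟩, by simpa using hai p⟩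
    · rw [filter_ne_zero_of_mem_starFiber (by omega) ha, card_insert_of_notMem hpI, hIk]
    · have := hai i
      split_ifs at this <;> simp_all

theorem ncard_partialSeqStar (c : ι → ℕ) (k : ℕ) {p : ι} {q : ℕ} (hq : 1 ≤ q)
    (hqc : q ≤ c p) :
    (partialSeqStar c (k + 1) p q).ncard =
      ∑ I ∈ powersetCard k (univ.erase p), ∏ i ∈ I, c i := by
  have hp : ∀ I ∈ powersetCard k (univ.erase p), p ∉ I := fun I hI h => by
    simpa using (mem_powersetCard.mp hI).1 h
  rw [partialSeqStar_eq_biUnion c k hq hqc, Set.ncard_coe_finset, card_biUnion]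
  · exact sum_congr rfl fun I hI => card_starFiber c q (hp I hI)
  · intro I hI J hJ hIJ
    refine disjoint_left.mpr fun a haI haJ => hIJ ?_
    have hsupp := (filter_ne_zero_of_mem_starFiber (by omega) haI).symm.trans
      (filter_ne_zero_of_mem_starFiber (by omega) haJ)
    simpa [erase_insert (hp I hI), erase_insert (hp J hJ)] using congrArg (erase · p) hsupp

theorem sum_prod_powersetCard_erase_le (c : ι → ℕ) {p p' : ι} (h : c p ≤ c p') (k : ℕ) :
    ∑ I ∈ powersetCard k (univ.erase p'), ∏ i ∈ I, c i ≤
      ∑ I ∈ powersetCard k (univ.erase p), ∏ i ∈ I, c i := by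
  set σ := Equiv.swap p p'
  have hσ : (univ.erase p').map σ.toEmbedding = univ.erase p := by
    rw [map_erase, map_univ_equiv]
    simp [σ]
  rw [← hσ, powersetCard_map, sum_map]
  refine sum_le_sum fun I hI => ?_
  have hp' : p' ∉ I := fun h => by simpa using (mem_powersetCard.mp hI).1 h
  rw [RelEmbedding.coe_toEmbedding, mapEmbedding_apply, prod_map]
  refine prod_le_prod' fun i hi => ?_
  by_cases hip : i = p
  · simpa [σ, hip] using h
  · have hip' : i ≠ p' := fun h => hp' (h ▸ hi)
    simp [σ, Equiv.swap_apply_of_ne_of_ne hip hip']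

theorem stmt18_general (n r : ℕ) (c : Fin (n + 1) → ℕ) (hmono : Monotone c) (hpos : ∀ i, 1 ≤ c i)
    (hr : 1 ≤ r) :
    Set.ncard {a : Fin (n + 1) → ℕ |
        ((Finset.univ.filter fun i => a i ≠ 0).card = r ∧ ∀ i, a i ≤ c i) ∧ a 0 = 1} =
      ∑ I ∈ Finset.powersetCard (r - 1) (Finset.univ.erase (0 : Fin (n + 1))),
        ∏ i ∈ I, c i ∧
    ∀ (p : Fin (n + 1)) (q : ℕ), 1 ≤ q → q ≤ c p →
      Set.ncard {a : Fin (n + 1) → ℕ |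
          ((Finset.univ.filter fun i => a i ≠ 0).card = r ∧ ∀ i, a i ≤ c i) ∧ a p = q} ≤
      Set.ncard {a : Fin (n + 1) → ℕ |
          ((Finset.univ.filter fun i => a i ≠ 0).card = r ∧ ∀ i, a i ≤ c i) ∧ a 0 = 1} := by
  obtain ⟨k, rfl⟩ := Nat.exists_eq_add_of_le' hr
  have hfirst := ncard_partialSeqStar c k le_rfl (hpos 0)
  refine ⟨hfirst, fun p q hq hqc => ?_⟩
  calc _ = _ := ncard_partialSeqStar c k hq hqc
    _ ≤ _ := sum_prod_powersetCard_erase_le c (hmono (Fin.zero_le p)) k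
    _ = _ := hfirst.symm

theorem stmt18 (n r : ℕ) (c : Fin (n + 1) → ℕ) (hmono : Monotone c) (hpos : ∀ i, 1 ≤ c i)
    (hr : 1 ≤ r) (hrn : r ≤ n + 1) :
    Set.ncard {a : Fin (n + 1) → ℕ |
        ((Finset.univ.filter fun i => a i ≠ 0).card = r ∧ ∀ i, a i ≤ c i) ∧ a 0 = 1} =
      ∑ I ∈ Finset.powersetCard (r - 1) (Finset.univ.erase (0 : Fin (n + 1))),
        ∏ i ∈ I, c i ∧
    ∀ (p : Fin (n + 1)) (q : ℕ), 1 ≤ q → q ≤ c p →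
      Set.ncard {a : Fin (n + 1) → ℕ |
          ((Finset.univ.filter fun i => a i ≠ 0).card = r ∧ ∀ i, a i ≤ c i) ∧ a p = q} ≤
      Set.ncard {a : Fin (n + 1) → ℕ |
          ((Finset.univ.filter fun i => a i ≠ 0).card = r ∧ ∀ i, a i ≤ c i) ∧ a 0 = 1} :=
  stmt18_general n r c hmono hpos hr
end
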